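/- For every discrete log-concave random variable X supported on ℕ and every t ≥ 0, P(X > t) ≤ e·exp(−2t/(5·(E[X]+1))). In particular, if E[X] ≥ 1, then P(X > t) ≤ e·exp(−t/(5·E[X])). -/

import Mathlib

/-- The support of `f : ℤ → ℝ` is contiguous. -/
def ContigSupportInt (f : ℤ → ℝ) : Prop :=
  ∀ a b c : ℤ, a ≤ b → b ≤ c → 0 < f a → 0 < f c → 0 < f b

/-- `p` is the p.m.f. of a log-concave probability measure on `ℤ`. -/
def IsLogConcavePMF (p : ℤ → ℝ) : Prop :=
  (∀ n, 0 ≤ p n) ∧ Summable p ∧ (∑' n : ℤ, p n) = 1 ∧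
    (∀ n : ℤ, p (n - 1) * p (n + 1) ≤ p n ^ 2) ∧ ContigSupportInt p

/-- `S ⊆ ℤ` is an interval. -/
def IsIntervalZ (S : Set ℤ) : Prop :=
  ∀ a b c : ℤ, a ≤ b → b ≤ c → a ∈ S → c ∈ S → b ∈ S

/-- The measure of a set `S ⊆ ℤ` under the p.m.f. `p`. -/
noncomputable def measOf (p : ℤ → ℝ) (S : Set ℤ) : ℝ :=
  ∑' n : ℤ, S.indicator p n

/-!
The tail sequence `R n = P(X ≥ n)` of a log-concave law on `ℕ` is again log-concave, with
`R 0 = 1`, so `n ↦ R n ^ (1 / n)` is nonincreasing. Let `μ` be the mean, `α = 2 / (5 (μ + 1))`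
and `k = ⌈1 / α⌉`. If `R k > e^{-αk}`, then `R j > e^{-αj}` for all `1 ≤ j ≤ k`, and
`μ ≥ ∑_{j=1}^k R j > ∑_{j=1}^k e^{-αj} ≥ (1 - α) / (2α) ≥ μ`. Hence `R k ≤ e^{-αk}`, so
`R n ≤ e^{-αn}` for `n ≥ k`, while `R n ≤ 1 ≤ e^{1-αn}` for `n < k`. The same monotonicity gives
geometric decay of `R`, which makes the mean finite in the first place.
-/

open Finset Real

theorem mul_succ_le_succ_mul_of_concave {a : ℕ → ℝ} {c : ℕ} (ha0 : a 0 = 0)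
    (hconc : ∀ i, i + 2 ≤ c → a i + a (i + 2) ≤ 2 * a (i + 1)) :
    ∀ n, n + 1 ≤ c → (n : ℝ) * a (n + 1) ≤ (n + 1) * a n
  | 0, _ => by simp [ha0]
  | n + 1, hn => by
    have ih := mul_succ_le_succ_mul_of_concave ha0 hconc n (by omega)
    have h := mul_le_mul_of_nonneg_left (hconc n hn) (by positivity : (0 : ℝ) ≤ n + 1)
    push_cast
    linarith

theorem mul_le_mul_of_concave {a : ℕ → ℝ} {b c : ℕ} (ha0 : a 0 = 0)
    (hconc : ∀ i, i + 2 ≤ c → a i + a (i + 2) ≤ 2 * a (i + 1)) (hbc : b ≤ c) :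
    (b : ℝ) * a c ≤ c * a b := by
  induction c, hbc using Nat.le_induction with
  | base => exact le_rfl
  | succ c hbc ih =>
    rcases Nat.eq_zero_or_pos c with rfl | hc
    · simp [Nat.le_zero.mp hbc, ha0]
    have hstep := mul_succ_le_succ_mul_of_concave ha0 hconc c le_rfl
    have ih := ih fun i hi => hconc i (by omega)
    have hc' : (0 : ℝ) < c := by exact_mod_cast hc
    push_cast
    refine le_of_mul_le_mul_left ?_ hc'
    nlinarith [mul_le_mul_of_nonneg_left hstep (Nat.cast_nonneg b : (0 : ℝ) ≤ b)]

theorem div_le_sum_range_exp_neg_pow {α : ℝ} {k : ℕ} (hα : 0 < α) (hk : 1 ≤ α * k) :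
    (1 - α) / (2 * α) ≤ ∑ j ∈ range k, exp (-α) ^ (j + 1) := by
  set x := exp (-α)
  have hxα : 1 - α ≤ x := by linarith [add_one_le_exp (-α)]
  have hxk : x ^ k ≤ 1 / 2 := by
    rw [← exp_nat_mul, show (1 / 2 : ℝ) = (2 : ℝ)⁻¹ by norm_num,
      ← exp_log (by norm_num : (0 : ℝ) < 2), ← exp_neg]
    exact exp_le_exp.mpr (by linarith [log_two_lt_d9])
  have hgeom : (∑ j ∈ range k, x ^ (j + 1)) * (1 - x) = x * (1 - x ^ k) := by
    simp_rw [pow_succ']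
    rw [← mul_sum]
    linear_combination (-x) * geom_sum_mul x k
  have hsum : 0 ≤ ∑ j ∈ range k, x ^ (j + 1) := sum_nonneg fun j _ => by positivity
  rw [div_le_iff₀ (by positivity)]
  calc 1 - α ≤ x * (2 * (1 - x ^ k)) := by nlinarith [exp_pos (-α)]
    _ = 2 * ((∑ j ∈ range k, x ^ (j + 1)) * (1 - x)) := by rw [hgeom]; ring
    _ ≤ (∑ j ∈ range k, x ^ (j + 1)) * (2 * α) := by nlinarith

structure IsLogConcaveTail (R : ℕ → ℝ) : Prop where
  zero : R 0 = 1
  nonneg : ∀ n, 0 ≤ R n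
  antitone : Antitone R
  logConcave : ∀ n, R n * R (n + 2) ≤ R (n + 1) ^ 2

namespace IsLogConcaveTail

variable {R : ℕ → ℝ}

theorem pow_le_pow (hR : IsLogConcaveTail R) {b c : ℕ} (hbc : b ≤ c) : R c ^ b ≤ R b ^ c := by
  rcases (hR.nonneg c).eq_or_lt with hc | hc
  · rcases Nat.eq_zero_or_pos b with rfl | hb
    · simp [hR.zero]
    · rw [← hc, zero_pow hb.ne']
      exact pow_nonneg (hR.nonneg b) c
  have hpos : ∀ j ≤ c, 0 < R j := fun j hj => hc.trans_le (hR.antitone hj)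
  have hconc : ∀ i, i + 2 ≤ c → log (R i) + log (R (i + 2)) ≤ 2 * log (R (i + 1)) := by
    intro i hi
    have h := log_le_log (mul_pos (hpos i (by omega)) (hpos _ hi)) (hR.logConcave i)
    rwa [log_mul (hpos i (by omega)).ne' (hpos _ hi).ne', log_pow, Nat.cast_ofNat] at h
  have hlog := mul_le_mul_of_concave (a := fun n => log (R n)) (by simp [hR.zero]) hconc hbc
  rw [← log_le_log_iff (pow_pos hc b) (pow_pos (hpos b hbc) c), log_pow, log_pow]
  exact hlog

theorem le_pow_of_le_pow (hR : IsLogConcaveTail R) {k n : ℕ} {y : ℝ} (hk : k ≠ 0) (hkn : k ≤ n)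
    (hy : 0 ≤ y) (h : R k ≤ y ^ k) : R n ≤ y ^ n := by
  refine le_of_pow_le_pow_left₀ hk (by positivity) ?_
  calc R n ^ k ≤ R k ^ n := hR.pow_le_pow hkn
    _ ≤ (y ^ k) ^ n := pow_le_pow_left₀ (hR.nonneg k) h n
    _ = (y ^ n) ^ k := by rw [← pow_mul, ← pow_mul, mul_comm]

theorem summable_natCast_mul (hR : IsLogConcaveTail R) {k : ℕ} (hk : k ≠ 0) (hRk : R k < 1) :
    Summable fun n : ℕ => (n : ℝ) * R n := by
  set y := R k ^ (k⁻¹ : ℝ)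
  have hy : 0 ≤ y := rpow_nonneg (hR.nonneg k) _
  have hy1 : ‖y‖ < 1 := by
    rw [norm_of_nonneg hy]
    exact rpow_lt_one (hR.nonneg k) hRk (by positivity)
  refine (summable_pow_mul_geometric_of_norm_lt_one 1 hy1).of_norm_bounded_eventually_nat ?_
  filter_upwards [Filter.eventually_ge_atTop k] with n hn
  rw [norm_of_nonneg (mul_nonneg n.cast_nonneg (hR.nonneg n)), pow_one]
  exact mul_le_mul_of_nonneg_left
    (hR.le_pow_of_le_pow hk hn hy (rpow_inv_natCast_pow (hR.nonneg k) hk).ge) n.cast_nonneg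

theorem pow_le_of_sum_le (hR : IsLogConcaveTail R) {μ α : ℝ} {k : ℕ}
    (hμ : ∑ j ∈ range k, R (j + 1) ≤ μ) (hα : 0 < α) (hk : 1 ≤ α * k)
    (hμα : μ ≤ (1 - α) / (2 * α)) : R k ≤ exp (-α) ^ k := by
  by_contra! h
  have hk0 : k ≠ 0 := by
    rintro rfl
    norm_num at hk
  have hlt : ∀ j ∈ range k, exp (-α) ^ (j + 1) < R (j + 1) := fun j hj =>
    lt_of_not_ge fun hj' =>
      h.not_ge (hR.le_pow_of_le_pow j.succ_ne_zero (mem_range.mp hj) (exp_pos _).le hj')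
  linarith [sum_lt_sum_of_nonempty (nonempty_range_iff.mpr hk0) hlt,
    div_le_sum_range_exp_neg_pow hα hk]

theorem le_exp_of_sum_le (hR : IsLogConcaveTail R) {μ : ℝ}
    (hμ : ∀ k, ∑ j ∈ range k, R (j + 1) ≤ μ) (n : ℕ) :
    R n ≤ exp 1 * exp (-(2 * n / (5 * (μ + 1)))) := by
  have hμ0 : 0 ≤ μ := by simpa using hμ 0
  set α := 2 / (5 * (μ + 1))
  have hα : 0 < α := by positivity
  have hαn : 2 * n / (5 * (μ + 1)) = α * n := by ring
  rw [hαn, ← exp_add]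
  set k := ⌈α⁻¹⌉₊
  rcases lt_or_ge n k with hn | hn
  · have : α * n ≤ 1 := by
      have := Nat.lt_ceil.mp hn
      rw [← mul_inv_cancel₀ hα.ne']
      gcongr
    calc R n ≤ R 0 := hR.antitone n.zero_le
      _ = 1 := hR.zero
      _ ≤ exp (1 + -(α * n)) := one_le_exp (by linarith)
  · have hk : 1 ≤ α * k := by
      rw [← mul_inv_cancel₀ hα.ne']
      exact mul_le_mul_of_nonneg_left (Nat.le_ceil _) hα.le
    have hμα : μ ≤ (1 - α) / (2 * α) := by
      rw [le_div_iff₀ (by positivity)]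
      simp only [α]
      field_simp
      nlinarith
    have hk0 : k ≠ 0 := by
      rintro h
      norm_num [h] at hk
    calc R n ≤ exp (-α) ^ n :=
          hR.le_pow_of_le_pow hk0 hn (exp_pos _).le (hR.pow_le_of_sum_le (hμ k) hα hk hμα)
      _ = exp (-(α * n)) := by rw [← exp_nat_mul]; ring_nf
      _ ≤ exp (1 + -(α * n)) := exp_le_exp.mpr (by linarith)

end IsLogConcaveTail

namespace IsLogConcavePMF

variable {p : ℤ → ℝ}

theorem apply_mul_apply_succ_le (hp : IsLogConcavePMF p) {n m : ℤ} (hnm : n ≤ m) :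
    p n * p (m + 1) ≤ p (n + 1) * p m := by
  obtain ⟨hnn, -, -, hlc, hcon⟩ := hp
  induction m, hnm using Int.leInduction with
  | base => rw [mul_comm]
  | succ m hnm ih =>
    rcases (hnn n).eq_or_lt with hn | hn
    · rw [← hn, zero_mul]
      exact mul_nonneg (hnn _) (hnn _)
    rcases (hnn (m + 1 + 1)).eq_or_lt with hm | hm
    · rw [← hm, mul_zero]
      exact mul_nonneg (hnn _) (hnn _)
    have hpm : 0 < p m := hcon n m (m + 1 + 1) hnm (by omega) hn hm
    have hlcm := hlc (m + 1)
    rw [add_sub_cancel_right] at hlcm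
    refine le_of_mul_le_mul_left ?_ hpm
    calc p m * (p n * p (m + 1 + 1)) = p n * (p m * p (m + 1 + 1)) := by ring
      _ ≤ p n * p (m + 1) ^ 2 := mul_le_mul_of_nonneg_left hlcm hn.le
      _ = p (m + 1) * (p n * p (m + 1)) := by ring
      _ ≤ p (m + 1) * (p (n + 1) * p m) := mul_le_mul_of_nonneg_left ih (hnn _)
      _ = p m * (p (n + 1) * p (m + 1)) := by ring

end IsLogConcavePMF

section Tails

variable {p : ℤ → ℝ}

theorem measOf_Ici_eq_add (hs : Summable p) (n : ℤ) :
    measOf p (Set.Ici n) = p n + measOf p (Set.Ici (n + 1)) := by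
  have hunion : Set.Ici n = {n} ∪ Set.Ici (n + 1) := by
    ext m
    simp only [Set.mem_Ici, Set.mem_union, Set.mem_singleton_iff]
    omega
  have hdisj : Disjoint {n} (Set.Ici (n + 1)) := by simp
  rw [measOf, hunion, Set.indicator_union_of_disjoint hdisj,
    Summable.tsum_add (hs.indicator _) (hs.indicator _), Set.indicator_singleton, tsum_pi_single]
  rfl

theorem measOf_nonneg (hnn : ∀ n, 0 ≤ p n) (S : Set ℤ) : 0 ≤ measOf p S :=
  tsum_nonneg fun _ => Set.indicator_nonneg (fun n _ => hnn n) _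

theorem measOf_Ici_zero (hp : IsLogConcavePMF p) (hsupp : ∀ n : ℤ, 0 < p n → 0 ≤ n) :
    measOf p (Set.Ici 0) = 1 := by
  rw [measOf, ← hp.2.2.1]
  refine tsum_congr fun n => Set.indicator_apply_eq_self.mpr fun hn => ?_
  by_contra hne
  exact hn (hsupp n ((hp.1 n).lt_of_ne' hne))

theorem apply_mul_measOf_Ici_le (hp : IsLogConcavePMF p) (n : ℤ) :
    p n * measOf p (Set.Ici (n + 2)) ≤ p (n + 1) * measOf p (Set.Ici (n + 1)) := by
  have hs := hp.2.1
  have hshift :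
      measOf p (Set.Ici (n + 1)) = ∑' m : ℤ, (Set.Ici (n + 1)).indicator p (m - 1) := by
    rw [measOf, ← (Equiv.subRight (1 : ℤ)).tsum_eq]
    simp only [Equiv.subRight_apply]
  have hshift_summable : Summable fun m : ℤ => (Set.Ici (n + 1)).indicator p (m - 1) := by
    simpa only [Function.comp_def, Equiv.subRight_apply] using
      (Equiv.subRight (1 : ℤ)).summable_iff.mpr (hs.indicator (Set.Ici (n + 1)))
  calc p n * measOf p (Set.Ici (n + 2))
      = ∑' m : ℤ, p n * (Set.Ici (n + 2)).indicator p m := tsum_mul_left.symm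
    _ ≤ ∑' m : ℤ, p (n + 1) * (Set.Ici (n + 1)).indicator p (m - 1) := by
      refine Summable.tsum_le_tsum (fun m => ?_) ((hs.indicator _).mul_left _)
        (hshift_summable.mul_left _)
      simp only [Set.indicator_apply, Set.mem_Ici]
      split_ifs with h h'
      · simpa using hp.apply_mul_apply_succ_le (show n ≤ m - 1 by omega)
      · omega
      · rw [mul_zero]
        exact mul_nonneg (hp.1 _) (hp.1 _)
      · simp
    _ = p (n + 1) * measOf p (Set.Ici (n + 1)) := by rw [tsum_mul_left, hshift]

theorem isLogConcaveTail_measOf_Ici (hp : IsLogConcavePMF p)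
    (hsupp : ∀ n : ℤ, 0 < p n → 0 ≤ n) :
    IsLogConcaveTail fun n : ℕ => measOf p (Set.Ici (n : ℤ)) where
  zero := measOf_Ici_zero hp hsupp
  nonneg _ := measOf_nonneg hp.1 _
  antitone := antitone_nat_of_succ_le fun n => by
    rw [measOf_Ici_eq_add hp.2.1 n]
    push_cast
    linarith [hp.1 n]
  logConcave n := by
    have h1 := measOf_Ici_eq_add hp.2.1 n
    have h2 := measOf_Ici_eq_add hp.2.1 (n + 1)
    rw [add_assoc, one_add_one_eq_two] at h2
    push_cast
    linear_combination apply_mul_measOf_Ici_le hp n + measOf p (Set.Ici (n + 2)) * h1 -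
      measOf p (Set.Ici (n + 1)) * h2

theorem summable_intCast_mul (hp : IsLogConcavePMF p) (hsupp : ∀ n : ℤ, 0 < p n → 0 ≤ n) :
    Summable fun n : ℤ => (n : ℝ) * p n := by
  have hR := isLogConcaveTail_measOf_Ici hp hsupp
  obtain ⟨i, hi⟩ : ∃ i, p i ≠ 0 := by
    by_contra! h
    simpa [h] using hp.2.2.1
  lift i to ℕ using hsupp i ((hp.1 i).lt_of_ne' hi)
  have hRi : measOf p (Set.Ici ((i + 1 : ℕ) : ℤ)) < 1 := by
    have := measOf_Ici_eq_add hp.2.1 i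
    have := hR.antitone i.zero_le
    simp only [Nat.cast_zero, measOf_Ici_zero hp hsupp] at this
    push_cast
    linarith [(hp.1 i).lt_of_ne' hi]
  have hnat : Summable fun n : ℕ => (n : ℝ) * p n :=
    (hR.summable_natCast_mul i.succ_ne_zero hRi).of_nonneg_of_le
      (fun n => mul_nonneg n.cast_nonneg (hp.1 n)) fun n => by
        refine mul_le_mul_of_nonneg_left ?_ n.cast_nonneg
        linarith [measOf_Ici_eq_add hp.2.1 n, measOf_nonneg hp.1 (Set.Ici ((n : ℤ) + 1))]
  refine (Nat.cast_injective.summable_iff fun n hn => ?_).mp hnat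
  have : p n = 0 := by
    by_contra h
    exact hn ⟨n.toNat, Int.toNat_of_nonneg (hsupp n ((hp.1 n).lt_of_ne' h))⟩
  rw [this, mul_zero]

theorem sum_range_indicator_Ici_le (hnn : ∀ n, 0 ≤ p n) (hsupp : ∀ n : ℤ, 0 < p n → 0 ≤ n)
    (k : ℕ) (n : ℤ) : ∑ j ∈ range k, (Set.Ici ((j + 1 : ℕ) : ℤ)).indicator p n ≤ n * p n := by
  rcases lt_or_ge n 0 with hn | hn
  · have : p n = 0 := (hnn n).eq_or_lt.resolve_right (fun h => (hsupp n h).not_gt hn) |>.symm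
    simp [Set.indicator_apply, this]
  lift n to ℕ using hn
  simp only [Set.indicator_apply, Set.mem_Ici, Nat.cast_le, Int.cast_natCast]
  rw [← sum_filter, sum_const, nsmul_eq_mul]
  refine mul_le_mul_of_nonneg_right ?_ (hnn n)
  have hcard : #{j ∈ range k | j + 1 ≤ n} ≤ #(range n) :=
    card_le_card fun j hj => by simp only [mem_filter, mem_range] at hj ⊢; omega
  exact_mod_cast hcard.trans (card_range n).le

theorem sum_range_measOf_Ici_le (hp : IsLogConcavePMF p) (hsupp : ∀ n : ℤ, 0 < p n → 0 ≤ n)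
    (k : ℕ) : ∑ j ∈ range k, measOf p (Set.Ici ((j + 1 : ℕ) : ℤ)) ≤ ∑' n : ℤ, (n : ℝ) * p n := by
  have hs : ∀ j ∈ range k, Summable ((Set.Ici ((j + 1 : ℕ) : ℤ)).indicator p) :=
    fun j _ => hp.2.1.indicator _
  simp only [measOf]
  rw [← Summable.tsum_finsetSum hs]
  exact Summable.tsum_le_tsum (sum_range_indicator_Ici_le hp.1 hsupp k) (summable_sum hs)
    (summable_intCast_mul hp hsupp)

end Tails

theorem setOf_lt_intCast_eq_Ici {t : ℝ} (ht : 0 ≤ t) :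
    {n : ℤ | t < n} = Set.Ici ((⌊t⌋₊ + 1 : ℕ) : ℤ) := by
  ext n
  rw [Set.mem_ofPred_eq, Set.mem_Ici, ← Int.floor_lt, Nat.cast_add, Int.natCast_floor_eq_floor ht]
  omega

/-- Large deviation inequality for discrete log-concave random variables supported on
`ℕ`: for all `t ≥ 0`, `P(X > t) ≤ e·exp(−2t/(5·(E[X]+1)))`; in particular, if
`E[X] ≥ 1`, then `P(X > t) ≤ e·exp(−t/(5·E[X]))`. -/
theorem large_deviation_mean (p : ℤ → ℝ) (hp : IsLogConcavePMF p)
    (hsupp : ∀ n : ℤ, 0 < p n → 0 ≤ n) :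
    (∀ t : ℝ, 0 ≤ t →
      measOf p { n : ℤ | t < (n : ℝ) } ≤
        Real.exp 1 * Real.exp (-(2 * t / (5 * ((∑' n : ℤ, (n : ℝ) * p n) + 1))))) ∧
    (1 ≤ ∑' n : ℤ, (n : ℝ) * p n → ∀ t : ℝ, 0 ≤ t →
      measOf p { n : ℤ | t < (n : ℝ) } ≤
        Real.exp 1 * Real.exp (-(t / (5 * ∑' n : ℤ, (n : ℝ) * p n)))) := by
  set μ := ∑' n : ℤ, (n : ℝ) * p n
  have hmean := sum_range_measOf_Ici_le hp hsupp
  have hμ : 0 ≤ μ := by simpa using hmean 0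
  have htail := (isLogConcaveTail_measOf_Ici hp hsupp).le_exp_of_sum_le hmean
  have hbound : ∀ t : ℝ, 0 ≤ t →
      measOf p {n : ℤ | t < n} ≤ exp 1 * exp (-(2 * t / (5 * (μ + 1)))) := by
    intro t ht
    rw [setOf_lt_intCast_eq_Ici ht]
    refine (htail _).trans ?_
    gcongr
    exact_mod_cast (Nat.lt_floor_add_one t).le
  refine ⟨hbound, fun hμ1 t ht => (hbound t ht).trans ?_⟩
  gcongr exp 1 * exp (-?_)
  rw [div_le_div_iff₀ (by positivity) (by positivity)]
  nlinarith
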